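/- In LK(T)p the theory-cut rules are admissible: (cut₁) if l is a polarised literal (l or ¬l is in P), the P-positive literals of Γ together with ¬l are T-inconsistent, and Γ, l ⊢ [P] Δ is derivable, then Γ ⊢ [P] Δ is derivable; (cut₂) likewise for focused sequents: under the same theory condition, derivability of Γ, l ⊢ [P] B implies derivability of Γ ⊢ [P] B. -/
import Mathlib


open scoped Classical

/-- Abstract structure of literals: an involutive negation (with `neg l ≠ l`),
substitution of terms for variables (commuting with negation), and free variables. -/
structure LitStr (V Tm Lit : Type) where
  neg : Lit → Lit
  neg_invol : ∀ l, neg (neg l) = l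
  neg_ne : ∀ l, neg l ≠ l
  substL : Lit → V → Tm → Lit
  substL_neg : ∀ l x t, substL (neg l) x t = neg (substL l x t)
  fvL : Lit → Set V

/-- Polarised formulae. -/
inductive PForm (V Lit : Type) where
  | lit (l : Lit)
  | andP (A B : PForm V Lit)
  | orP (A B : PForm V Lit)
  | exi (x : V) (A : PForm V Lit)
  | topP
  | botP
  | andN (A B : PForm V Lit)
  | orN (A B : PForm V Lit)
  | fa (x : V) (A : PForm V Lit)
  | topN
  | botN

namespace PForm

variable {V Tm Lit : Type}

/-- Negation of polarised formulae (De Morgan duality, swapping polarities). -/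
def negF (S : LitStr V Tm Lit) : PForm V Lit → PForm V Lit
  | .lit l => .lit (S.neg l)
  | .andP A B => .orN (negF S A) (negF S B)
  | .orP A B => .andN (negF S A) (negF S B)
  | .exi x A => .fa x (negF S A)
  | .topP => .botN
  | .botP => .topN
  | .andN A B => .orP (negF S A) (negF S B)
  | .orN A B => .andP (negF S A) (negF S B)
  | .fa x A => .exi x (negF S A)
  | .topN => .botP
  | .botN => .topP

/-- (Naive) substitution of a term for a variable in a formula. -/
noncomputable def substF (S : LitStr V Tm Lit) (x : V) (t : Tm) : PForm V Lit → PForm V Lit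
  | .lit l => .lit (S.substL l x t)
  | .andP A B => .andP (substF S x t A) (substF S x t B)
  | .orP A B => .orP (substF S x t A) (substF S x t B)
  | .exi y A => if y = x then .exi y A else .exi y (substF S x t A)
  | .topP => .topP
  | .botP => .botP
  | .andN A B => .andN (substF S x t A) (substF S x t B)
  | .orN A B => .orN (substF S x t A) (substF S x t B)
  | .fa y A => if y = x then .fa y A else .fa y (substF S x t A)
  | .topN => .topN
  | .botN => .botN

/-- Free variables of a formula. -/
def fvF (S : LitStr V Tm Lit) : PForm V Lit → Set V
  | .lit l => S.fvL l
  | .andP A B => fvF S A ∪ fvF S B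
  | .orP A B => fvF S A ∪ fvF S B
  | .exi y A => fvF S A \ {y}
  | .topP => ∅
  | .botP => ∅
  | .andN A B => fvF S A ∪ fvF S B
  | .orN A B => fvF S A ∪ fvF S B
  | .fa y A => fvF S A \ {y}
  | .topN => ∅
  | .botN => ∅

/-- `P`-positive formulae. -/
def IsPos (P : Set Lit) : PForm V Lit → Prop
  | .lit l => l ∈ P
  | .andP _ _ => True
  | .orP _ _ => True
  | .exi _ _ => True
  | .topP => True
  | .botP => True
  | _ => False

/-- `P`-negative formulae. -/
def IsNeg (S : LitStr V Tm Lit) (P : Set Lit) : PForm V Lit → Prop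
  | .lit l => S.neg l ∈ P
  | .andN _ _ => True
  | .orN _ _ => True
  | .fa _ _ => True
  | .topN => True
  | .botN => True
  | _ => False

/-- The formula is a literal. -/
def isLit : PForm V Lit → Prop := fun A => ∃ l, A = lit l

end PForm

variable {V Tm Lit : Type}

/-- Syntactical consistency of a set of literals. -/
def SynCons (S : LitStr V Tm Lit) (P : Set Lit) : Prop := ¬ ∃ l, l ∈ P ∧ S.neg l ∈ P

/-- `l` is `P`-unpolarised. -/
def UnpolLit (S : LitStr V Tm Lit) (P : Set Lit) (l : Lit) : Prop := l ∉ P ∧ S.neg l ∉ P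

/-- `P⟨A⟩`: extend the polarisation set `P` with `A` when `A` is a `P`-unpolarised literal. -/
def polar (S : LitStr V Tm Lit) (P : Set Lit) (A : PForm V Lit) : Set Lit :=
  P ∪ {m | A = PForm.lit m ∧ UnpolLit S P m}

/-- `Γ^P`: the `P`-positive literals occurring in `Γ` (as a set). -/
def posLits (P : Set Lit) (Γ : Multiset (PForm V Lit)) : Set Lit :=
  {l | l ∈ P ∧ PForm.lit l ∈ Γ}

/-- The literals occurring in `Γ` (as a set). -/
def litSet (Γ : Multiset (PForm V Lit)) : Set Lit := {l | PForm.lit l ∈ Γ}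

/-- Negation of a multiset of formulae. -/
def negM (S : LitStr V Tm Lit) (Δ : Multiset (PForm V Lit)) : Multiset (PForm V Lit) :=
  Δ.map (PForm.negF S)

/-- Free variables of a multiset of formulae. -/
def fvM (S : LitStr V Tm Lit) (Γ : Multiset (PForm V Lit)) : Set V :=
  {x | ∃ A ∈ Γ, x ∈ PForm.fvF S A}

/-- Free variables of a polarisation set. -/
def fvPol (S : LitStr V Tm Lit) (P : Set Lit) : Set V := {x | ∃ l ∈ P, x ∈ S.fvL l}

/-- An inconsistency predicate: basic inconsistency, upward closure (weakening),
cut-admissibility, and stability under instantiation. -/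
structure InconsPred (S : LitStr V Tm Lit) (T : Set Lit → Prop) : Prop where
  basic : ∀ l : Lit, T {l, S.neg l}
  mono : ∀ ⦃A B : Set Lit⦄, A ⊆ B → T A → T B
  cut : ∀ (A : Set Lit) (l : Lit), T (insert l A) → T (insert (S.neg l) A) → T A
  inst : ∀ (A : Set Lit) (x : V) (t : Tm), T A → T ((fun l => S.substL l x t) '' A)

/-- Syntactical inconsistency: the set contains some literal together with its negation. -/
def SynIncons (S : LitStr V Tm Lit) (A : Set Lit) : Prop := ∃ l, l ∈ A ∧ S.neg l ∈ A

mutual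
  /-- Focused sequents `Γ ⊢ [P] A` of LK(T)p, with a height index. -/
  inductive DerPos (S : LitStr V Tm Lit) (T : Set Lit → Prop) :
      Multiset (PForm V Lit) → Set Lit → PForm V Lit → ℕ → Prop where
    | andP {Γ P A B n m} : DerPos S T Γ P A n → DerPos S T Γ P B m →
        DerPos S T Γ P (.andP A B) (max n m + 1)
    | orP₁ {Γ P A B n} : DerPos S T Γ P A n → DerPos S T Γ P (.orP A B) (n + 1)
    | orP₂ {Γ P A B n} : DerPos S T Γ P B n → DerPos S T Γ P (.orP A B) (n + 1)
    | exi {Γ P x t A n} : DerPos S T Γ P (PForm.substF S x t A) n →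
        DerPos S T Γ P (.exi x A) (n + 1)
    | topP {Γ P} : DerPos S T Γ P .topP 0
    | init1 {Γ P l} : l ∈ P → T (posLits P Γ ∪ {S.neg l}) → DerPos S T Γ P (.lit l) 0
    | release {Γ P N n} : ¬ PForm.IsPos P N → DerNeg S T Γ P {N} n →
        DerPos S T Γ P N (n + 1)

  /-- Unfocused sequents `Γ ⊢ [P] Δ` of LK(T)p, with a height index. -/
  inductive DerNeg (S : LitStr V Tm Lit) (T : Set Lit → Prop) :
      Multiset (PForm V Lit) → Set Lit → Multiset (PForm V Lit) → ℕ → Prop where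
    | andN {Γ P A B Δ n m} : DerNeg S T Γ P (A ::ₘ Δ) n → DerNeg S T Γ P (B ::ₘ Δ) m →
        DerNeg S T Γ P (.andN A B ::ₘ Δ) (max n m + 1)
    | orN {Γ P A B Δ n} : DerNeg S T Γ P (A ::ₘ B ::ₘ Δ) n →
        DerNeg S T Γ P (.orN A B ::ₘ Δ) (n + 1)
    | fa {Γ P x A Δ n} : x ∉ fvM S Γ ∪ fvM S Δ ∪ fvPol S P →
        DerNeg S T Γ P (A ::ₘ Δ) n → DerNeg S T Γ P (.fa x A ::ₘ Δ) (n + 1)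
    | botN {Γ P Δ n} : DerNeg S T Γ P Δ n → DerNeg S T Γ P (.botN ::ₘ Δ) (n + 1)
    | topN {Γ P Δ} : DerNeg S T Γ P (.topN ::ₘ Δ) 0
    | store {Γ P A Δ n} : (PForm.isLit A ∨ PForm.IsPos P A) →
        DerNeg S T (PForm.negF S A ::ₘ Γ) (polar S P (PForm.negF S A)) Δ n →
        DerNeg S T Γ P (A ::ₘ Δ) (n + 1)
    | select {Γ P A n} : ¬ PForm.IsNeg S P A → PForm.negF S A ∈ Γ →
        DerPos S T Γ P A n → DerNeg S T Γ P 0 (n + 1)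
    | init2 {Γ P} : T (posLits P Γ) → DerNeg S T Γ P 0 0
end

/-- Derivability of a focused sequent in LK(T)p. -/
def DerPosD (S : LitStr V Tm Lit) (T : Set Lit → Prop)
    (Γ : Multiset (PForm V Lit)) (P : Set Lit) (A : PForm V Lit) : Prop :=
  ∃ n, DerPos S T Γ P A n

/-- Derivability of an unfocused sequent in LK(T)p. -/
def DerNegD (S : LitStr V Tm Lit) (T : Set Lit → Prop)
    (Γ : Multiset (PForm V Lit)) (P : Set Lit) (Δ : Multiset (PForm V Lit)) : Prop :=
  ∃ n, DerNeg S T Γ P Δ n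

/-- Closure of a set of literals under all substitutions. -/
inductive ClSubst (S : LitStr V Tm Lit) (A : Set Lit) : Lit → Prop
  | base {l} : l ∈ A → ClSubst S A l
  | step {l} (x : V) (t : Tm) : ClSubst S A l → ClSubst S A (S.substL l x t)

/-- Safety of a pair `(Γ, P)`. -/
def Safe (S : LitStr V Tm Lit) (T : Set Lit → Prop)
    (Γ : Multiset (PForm V Lit)) (P : Set Lit) : Prop :=
  ∀ Γ' : Multiset (PForm V Lit), Γ ≤ Γ' →
    ∀ R : Set Lit, ¬ T R →
      posLits P Γ' ⊆ R →
      R ⊆ posLits P Γ' ∪ {l | ClSubst S {m | UnpolLit S P m} l} →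
      ∀ l ∈ P, T (R ∪ {S.neg l}) → T (posLits P Γ' ∪ {S.neg l})

/-- Free variables of an optional focus. -/
def fvO (S : LitStr V Tm Lit) : Option (PForm V Lit) → Set V
  | none => ∅
  | some A => PForm.fvF S A

/-- Sequents `Γ ⊢ [P] X ; Δ` of the relaxed system LK(T)ex. -/
inductive DerEx (S : LitStr V Tm Lit) (T : Set Lit → Prop) :
    Multiset (PForm V Lit) → Set Lit → Option (PForm V Lit) → Multiset (PForm V Lit) → Prop where
  | andP {Γ P A B Δ} : DerEx S T Γ P (some A) Δ → DerEx S T Γ P (some B) Δ →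
      DerEx S T Γ P (some (.andP A B)) Δ
  | orP₁ {Γ P A B Δ} : DerEx S T Γ P (some A) Δ → DerEx S T Γ P (some (.orP A B)) Δ
  | orP₂ {Γ P A B Δ} : DerEx S T Γ P (some B) Δ → DerEx S T Γ P (some (.orP A B)) Δ
  | exi {Γ P x t A Δ} : DerEx S T Γ P (some (PForm.substF S x t A)) Δ →
      DerEx S T Γ P (some (.exi x A)) Δ
  | topP {Γ P Δ} : DerEx S T Γ P (some .topP) Δ
  | init1 {Γ P l Δ} : l ∈ P → T (posLits P Γ ∪ {S.neg l} ∪ litSet (negM S Δ)) →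
      DerEx S T Γ P (some (.lit l)) Δ
  | release {Γ P N} : ¬ PForm.IsPos P N → DerEx S T Γ P none {N} →
      DerEx S T Γ P (some N) 0
  | andN {Γ P X A B Δ} : DerEx S T Γ P X (A ::ₘ Δ) → DerEx S T Γ P X (B ::ₘ Δ) →
      DerEx S T Γ P X (.andN A B ::ₘ Δ)
  | orN {Γ P X A B Δ} : DerEx S T Γ P X (A ::ₘ B ::ₘ Δ) →
      DerEx S T Γ P X (.orN A B ::ₘ Δ)
  | fa {Γ P X x A Δ} : x ∉ fvM S Γ ∪ fvM S Δ ∪ fvPol S P ∪ fvO S X →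
      DerEx S T Γ P X (A ::ₘ Δ) → DerEx S T Γ P X (.fa x A ::ₘ Δ)
  | botN {Γ P X Δ} : DerEx S T Γ P X Δ → DerEx S T Γ P X (.botN ::ₘ Δ)
  | topN {Γ P X Δ} : DerEx S T Γ P X (.topN ::ₘ Δ)
  | store {Γ P X A Δ} : (PForm.isLit A ∨ PForm.IsPos P A) →
      DerEx S T (PForm.negF S A ::ₘ Γ) (polar S P (PForm.negF S A)) X Δ →
      DerEx S T Γ P X (A ::ₘ Δ)
  | select {Γ P A Δ} : ¬ PForm.IsNeg S P A → PForm.negF S A ∈ Γ →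
      DerEx S T Γ P (some A) Δ → DerEx S T Γ P none Δ
  | init2 {Γ P Δ} : T (posLits P Γ ∪ litSet (negM S Δ)) → DerEx S T Γ P none Δ


section CutAux

variable {V Tm Lit : Type}

private lemma posLits_mono' {P P' : Set Lit} {Γ Γ' : Multiset (PForm V Lit)}
    (hP : P ⊆ P') (hΓ : Γ ≤ Γ') : posLits P Γ ⊆ posLits P' Γ' := by
  rintro m ⟨h1, h2⟩
  exact ⟨hP h1, Multiset.mem_of_le hΓ h2⟩

private lemma posLits_cons_mem {P : Set Lit} {Γ : Multiset (PForm V Lit)} {l : Lit}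
    (hl : l ∈ P) : posLits P (PForm.lit l ::ₘ Γ) = insert l (posLits P Γ) := by
  ext m
  simp only [posLits, Set.mem_setOf_eq, Multiset.mem_cons, Set.mem_insert_iff,
    PForm.lit.injEq]
  constructor
  · rintro ⟨hm, h | h⟩
    · exact Or.inl h
    · exact Or.inr ⟨hm, h⟩
  · rintro (rfl | ⟨hm, h⟩)
    · exact ⟨hl, Or.inl rfl⟩
    · exact ⟨hm, Or.inr h⟩

private lemma posLits_cons_not_mem {P : Set Lit} {Γ : Multiset (PForm V Lit)} {l : Lit}
    (hl : l ∉ P) : posLits P (PForm.lit l ::ₘ Γ) = posLits P Γ := by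
  ext m
  simp only [posLits, Set.mem_setOf_eq, Multiset.mem_cons, PForm.lit.injEq]
  constructor
  · rintro ⟨hm, h | h⟩
    · exact absurd (h ▸ hm) hl
    · exact ⟨hm, h⟩
  · rintro ⟨hm, h⟩
    exact ⟨hm, Or.inr h⟩

private lemma cut_aux {S : LitStr V Tm Lit} {T : Set Lit → Prop} (hT : InconsPred S T)
    {P : Set Lit} {Γ : Multiset (PForm V Lit)} {l : Lit} (X : Set Lit)
    (h1 : T (posLits P Γ ∪ {S.neg l}))
    (h2 : T (posLits P (PForm.lit l ::ₘ Γ) ∪ X)) : T (posLits P Γ ∪ X) := by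
  by_cases hl : l ∈ P
  · refine hT.cut _ l ?_ ?_
    · rw [posLits_cons_mem hl, Set.insert_union] at h2
      exact h2
    · refine hT.mono ?_ h1
      intro m hm
      rcases hm with hm | hm
      · exact Set.mem_insert_of_mem _ (Set.mem_union_left _ hm)
      · exact hm ▸ Set.mem_insert _ _
  · rwa [posLits_cons_not_mem hl] at h2

private lemma fvM_mono {S : LitStr V Tm Lit} {Γ Γ' : Multiset (PForm V Lit)}
    (h : Γ ≤ Γ') : fvM S Γ ⊆ fvM S Γ' := by
  rintro x ⟨A, hA, hx⟩
  exact ⟨A, Multiset.mem_of_le h hA, hx⟩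

end CutAux

/-- The theory-cut rules cut₁ and cut₂ are admissible in LK(T)p. -/
theorem theory_cuts_admissible {V Tm Lit : Type} (S : LitStr V Tm Lit)
    (T : Set Lit → Prop) (hT : InconsPred S T) :
    (∀ (Γ : Multiset (PForm V Lit)) (P : Set Lit) (Δ : Multiset (PForm V Lit)) (l : Lit),
        (l ∈ P ∨ S.neg l ∈ P) →
        T (posLits P Γ ∪ {S.neg l}) →
        DerNegD S T (PForm.lit l ::ₘ Γ) P Δ → DerNegD S T Γ P Δ) ∧
    (∀ (Γ : Multiset (PForm V Lit)) (P : Set Lit) (B : PForm V Lit) (l : Lit),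
        (l ∈ P ∨ S.neg l ∈ P) →
        T (posLits P Γ ∪ {S.neg l}) →
        DerPosD S T (PForm.lit l ::ₘ Γ) P B → DerPosD S T Γ P B) := by
  suffices H : ∀ n : ℕ,
      (∀ (Γ : Multiset (PForm V Lit)) (P : Set Lit) (Δ : Multiset (PForm V Lit)) (l : Lit),
        (l ∈ P ∨ S.neg l ∈ P) → T (posLits P Γ ∪ {S.neg l}) →
        DerNeg S T (PForm.lit l ::ₘ Γ) P Δ n → DerNegD S T Γ P Δ) ∧
      (∀ (Γ : Multiset (PForm V Lit)) (P : Set Lit) (B : PForm V Lit) (l : Lit),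
        (l ∈ P ∨ S.neg l ∈ P) → T (posLits P Γ ∪ {S.neg l}) →
        DerPos S T (PForm.lit l ::ₘ Γ) P B n → DerPosD S T Γ P B) by
    constructor
    · rintro Γ P Δ l hp ht ⟨n, hd⟩
      exact (H n).1 Γ P Δ l hp ht hd
    · rintro Γ P B l hp ht ⟨n, hd⟩
      exact (H n).2 Γ P B l hp ht hd
  intro n
  induction n using Nat.strong_induction_on with
  | _ n IH =>
  constructor
  · intro Γ P Δ l hp ht hd
    cases hd with
    | andN h1 h2 =>
        obtain ⟨n1, d1⟩ := (IH _ (Nat.lt_succ_of_le (le_max_left _ _))).1 _ _ _ _ hp ht h1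
        obtain ⟨n2, d2⟩ := (IH _ (Nat.lt_succ_of_le (le_max_right _ _))).1 _ _ _ _ hp ht h2
        exact ⟨_, .andN d1 d2⟩
    | orN h1 =>
        obtain ⟨n1, d1⟩ := (IH _ (Nat.lt_succ_self _)).1 _ _ _ _ hp ht h1
        exact ⟨_, .orN d1⟩
    | fa hx h1 =>
        obtain ⟨n1, d1⟩ := (IH _ (Nat.lt_succ_self _)).1 _ _ _ _ hp ht h1
        refine ⟨_, .fa ?_ d1⟩
        intro hx'
        apply hx
        rcases hx' with (hx' | hx') | hx'
        · exact Or.inl (Or.inl (fvM_mono (Multiset.le_cons_self _ _) hx'))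
        · exact Or.inl (Or.inr hx')
        · exact Or.inr hx'
    | botN h1 =>
        obtain ⟨n1, d1⟩ := (IH _ (Nat.lt_succ_self _)).1 _ _ _ _ hp ht h1
        exact ⟨_, .botN d1⟩
    | topN => exact ⟨_, .topN⟩
    | store hA h1 =>
        rename_i A Δ' n'
        rw [Multiset.cons_swap] at h1
        have hp' : l ∈ polar S P (PForm.negF S A) ∨ S.neg l ∈ polar S P (PForm.negF S A) :=
          hp.imp (fun h => Set.mem_union_left _ h) (fun h => Set.mem_union_left _ h)
        have ht' : T (posLits (polar S P (PForm.negF S A)) (PForm.negF S A ::ₘ Γ) ∪ {S.neg l}) :=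
          hT.mono (Set.union_subset_union_left _
            (posLits_mono' Set.subset_union_left (Multiset.le_cons_self _ _))) ht
        obtain ⟨n1, d1⟩ := (IH _ (Nat.lt_succ_self _)).1 _ _ _ _ hp' ht' h1
        exact ⟨_, .store hA d1⟩
    | select hA hmem h1 =>
        rename_i A n'
        rcases Multiset.mem_cons.mp hmem with heq | hmem'
        · -- negF A = lit l, so A is the literal neg l
          obtain ⟨l', rfl⟩ : ∃ l', A = PForm.lit l' := by
            cases A <;> first | exact ⟨_, rfl⟩ | simp [PForm.negF] at heq
          have hl' : S.neg l' = l := by simpa [PForm.negF] using heq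
          have hl'' : l' = S.neg l := by rw [← hl', S.neg_invol]
          have hlP : l ∉ P := by
            intro hlP
            exact hA (by simpa [PForm.IsNeg, hl'] using hlP)
          have hnl : S.neg l ∈ P := hp.resolve_left hlP
          cases h1 with
          | init1 _ ht2 =>
              rw [hl'', S.neg_invol] at ht2
              have h3 : T (posLits P Γ ∪ {l}) := cut_aux hT _ ht ht2
              have h4 : T (posLits P Γ) := by
                refine hT.cut _ l ?_ ?_
                · rwa [Set.union_singleton] at h3
                · rwa [Set.union_singleton] at ht
              exact ⟨0, .init2 h4⟩
          | release hnp _ =>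
              exact absurd (by simpa [PForm.IsPos, hl''] using hnl) hnp
        · obtain ⟨n1, d1⟩ := (IH _ (Nat.lt_succ_self _)).2 _ _ _ _ hp ht h1
          exact ⟨_, .select hA hmem' d1⟩
    | init2 ht2 =>
        have h3 : T (posLits P Γ ∪ (∅ : Set Lit)) :=
          cut_aux hT ∅ ht (by simpa using ht2)
        exact ⟨0, .init2 (by simpa using h3)⟩
  · intro Γ P B l hp ht hd
    cases hd with
    | andP h1 h2 =>
        obtain ⟨n1, d1⟩ := (IH _ (Nat.lt_succ_of_le (le_max_left _ _))).2 _ _ _ _ hp ht h1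
        obtain ⟨n2, d2⟩ := (IH _ (Nat.lt_succ_of_le (le_max_right _ _))).2 _ _ _ _ hp ht h2
        exact ⟨_, .andP d1 d2⟩
    | orP₁ h1 =>
        obtain ⟨n1, d1⟩ := (IH _ (Nat.lt_succ_self _)).2 _ _ _ _ hp ht h1
        exact ⟨_, .orP₁ d1⟩
    | orP₂ h1 =>
        obtain ⟨n1, d1⟩ := (IH _ (Nat.lt_succ_self _)).2 _ _ _ _ hp ht h1
        exact ⟨_, .orP₂ d1⟩
    | exi h1 =>
        obtain ⟨n1, d1⟩ := (IH _ (Nat.lt_succ_self _)).2 _ _ _ _ hp ht h1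
        exact ⟨_, .exi d1⟩
    | topP => exact ⟨_, .topP⟩
    | init1 hl ht2 =>
        exact ⟨0, .init1 hl (cut_aux hT _ ht ht2)⟩
    | release hnp h1 =>
        obtain ⟨n1, d1⟩ := (IH _ (Nat.lt_succ_self _)).1 _ _ _ _ hp ht h1
        exact ⟨_, .release hnp d1⟩
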